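/- arXiv:math/0503280 — 2 statements merged into one kernel-verified Lean document; each statement's English description precedes it below -/
import Mathlib

section
/- In any group, if elements a, b, c satisfy a⁻¹ba = b², c⁻¹ac = a², and b⁻¹cb = c², then c² = a⁻²b⁻². -/
/-!
If `x⁻¹ y x = y ^ k` then conjugation by `x ^ n` raises `y` to the power `k ^ n`; in particular
the order of `y` divides `2 ^ (order of x) - 1` for each of the three relations. Expanding the
conjugate of `a b ^ 2` by `c` in two ways gives `a ^ 10 b ^ 130995 = 1`, so `a ^ 10` commutes with
`b` while conjugating it to `b ^ 1024`: hence `b ^ 1023 = 1` and `b` has finite order. The orders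
`d, e, m` of `a, c, b` then satisfy `d ∣ 2 ^ e - 1`, `e ∣ 2 ^ m - 1`, `m ∣ 2 ^ d - 1`, and since
a prime `p ∣ 2 ^ n - 1` forces a prime factor of `n` below `p` (the order of `2` mod `p`), no
prime divides `d e m`. So `a = b = c = 1`.
-/

section ConjPow

variable {G : Type*} [Group G] {x y : G} {k : ℕ}

theorem conj_pow_pow_eq_pow (h : x⁻¹ * y * x = y ^ k) (n j : ℕ) :
    (x ^ n)⁻¹ * y ^ j * x ^ n = y ^ (k ^ n * j) := by
  induction n with
  | zero => simp
  | succ n ih =>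
    calc (x ^ (n + 1))⁻¹ * y ^ j * x ^ (n + 1)
        = x⁻¹ * ((x ^ n)⁻¹ * y ^ j * x ^ n) * x := by group
      _ = (x⁻¹ * y * x) ^ (k ^ n * j) := by rw [ih]; simpa using (conj_pow (a := x⁻¹)).symm
      _ = y ^ (k ^ (n + 1) * j) := by rw [h, ← pow_mul]; ring_nf

theorem pow_mul_pow_eq_pow_mul_pow (h : x⁻¹ * y * x = y ^ k) (n j : ℕ) :
    y ^ j * x ^ n = x ^ n * y ^ (k ^ n * j) := by
  rw [← conj_pow_pow_eq_pow h]; group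

theorem pow_pow_sub_one_eq_one_of_commute (h : x⁻¹ * y * x = y ^ k) {n : ℕ}
    (hn : Commute (x ^ n) y) : y ^ (k ^ n - 1) = 1 := by
  have hfix : y ^ k ^ n = y := by
    have := conj_pow_pow_eq_pow h n 1
    rwa [pow_one, mul_one, mul_assoc, ← hn.eq, inv_mul_cancel_left, eq_comm] at this
  rcases eq_or_ne (k ^ n) 0 with h0 | h0
  · simp [h0]
  · exact mul_eq_right.mp ((pow_sub_one_mul h0 y).trans hfix)

theorem orderOf_dvd_pow_orderOf_sub_one (h : x⁻¹ * y * x = y ^ k) :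
    orderOf y ∣ k ^ orderOf x - 1 :=
  orderOf_dvd_of_pow_eq_one <| pow_pow_sub_one_eq_one_of_commute h (by simp)

theorem mul_pow_pow_mul_pow_eq (h : x⁻¹ * y * x = y ^ 2) (j n : ℕ) :
    (x * y ^ j) ^ n * y ^ j = x ^ n * y ^ (2 ^ n * j) := by
  induction n with
  | zero => simp
  | succ n ih =>
    calc (x * y ^ j) ^ (n + 1) * y ^ j = x * y ^ j * ((x * y ^ j) ^ n * y ^ j) := by group
      _ = x * (y ^ j * x ^ n) * y ^ (2 ^ n * j) := by rw [ih]; group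
      _ = x ^ (n + 1) * y ^ (2 ^ (n + 1) * j) := by
        rw [pow_mul_pow_eq_pow_mul_pow h, mul_assoc, mul_assoc, ← pow_add, ← mul_assoc,
          ← pow_succ']
        ring_nf

theorem conj_conj_eq_pow_of_conj_eq_sq {z w : G} {j : ℕ} (hw : w⁻¹ * z * w = z ^ 2)
    (hy : (z ^ 2)⁻¹ * y * z ^ 2 = y ^ j) :
    z⁻¹ * (w * y * w⁻¹) * z = (w * y * w⁻¹) ^ j := by
  rw [← hw] at hy
  calc z⁻¹ * (w * y * w⁻¹) * z = w * ((w⁻¹ * z * w)⁻¹ * y * (w⁻¹ * z * w)) * w⁻¹ := by group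
    _ = (w * y * w⁻¹) ^ j := by rw [hy, conj_pow]

end ConjPow

theorem exists_prime_dvd_lt_of_dvd_two_pow_sub_one {p n : ℕ} (hp : p.Prime) (hn : n ≠ 0)
    (hpn : p ∣ 2 ^ n - 1) : ∃ q, q.Prime ∧ q ∣ n ∧ q < p := by
  have := Fact.mk hp
  have h2n : (2 : ZMod p) ^ n = 1 := by
    have := (ZMod.natCast_eq_natCast_iff _ _ _).mpr
      ((Nat.modEq_iff_dvd' Nat.one_le_two_pow).mpr hpn)
    exact_mod_cast this.symm
  have h2ne0 : (2 : ZMod p) ≠ 0 := fun h0 => by simp [h0, zero_pow hn] at h2n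
  have h2ne1 : (2 : ZMod p) ≠ 1 := fun h1 => by
    have : (1 : ZMod p) + 1 = 1 := by rw [one_add_one_eq_two, h1]
    simp at this
  have hdvd : orderOf (2 : ZMod p) ∣ p - 1 := ZMod.orderOf_dvd_card_sub_one h2ne0
  have hpos : 0 < orderOf (2 : ZMod p) := Nat.pos_of_dvd_of_pos hdvd (by have := hp.two_le; omega)
  refine ⟨(orderOf (2 : ZMod p)).minFac, Nat.minFac_prime (mt orderOf_eq_one_iff.mp h2ne1),
    (Nat.minFac_dvd _).trans (orderOf_dvd_of_pow_eq_one h2n), ?_⟩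
  have := Nat.le_of_dvd (by have := hp.two_le; omega) hdvd
  have := Nat.minFac_le hpos
  omega

theorem eq_one_of_dvd_two_pow_sub_one_cycle {d e m : ℕ} (hm : m ≠ 0) (hde : d ∣ 2 ^ e - 1)
    (hem : e ∣ 2 ^ m - 1) (hmd : m ∣ 2 ^ d - 1) : d = 1 ∧ e = 1 ∧ m = 1 := by
  have he : e ≠ 0 := ne_zero_of_dvd_ne_zero (Nat.sub_ne_zero_of_lt (Nat.one_lt_two_pow hm)) hem
  have hd : d ≠ 0 := ne_zero_of_dvd_ne_zero (Nat.sub_ne_zero_of_lt (Nat.one_lt_two_pow he)) hde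
  -- a prime factor of `d * e * m` always yields a smaller one, so there is none
  have hprime : ∀ p, p.Prime → ¬ p ∣ d * e * m := by
    intro p
    induction p using Nat.strong_induction_on with
    | _ p ih =>
      intro hp hpdvd
      obtain ⟨q, hq, hqdvd, hqp⟩ : ∃ q, q.Prime ∧ q ∣ d * e * m ∧ q < p := by
        rcases hp.dvd_mul.mp hpdvd with hpde | hpm
        · rcases hp.dvd_mul.mp hpde with hpd | hpe
          · obtain ⟨q, hq, hqe, hqp⟩ :=
              exists_prime_dvd_lt_of_dvd_two_pow_sub_one hp he (hpd.trans hde)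
            exact ⟨q, hq, (hqe.mul_left d).mul_right m, hqp⟩
          · obtain ⟨q, hq, hqm, hqp⟩ :=
              exists_prime_dvd_lt_of_dvd_two_pow_sub_one hp hm (hpe.trans hem)
            exact ⟨q, hq, hqm.mul_left _, hqp⟩
        · obtain ⟨q, hq, hqd, hqp⟩ :=
            exists_prime_dvd_lt_of_dvd_two_pow_sub_one hp hd (hpm.trans hmd)
          exact ⟨q, hq, (hqd.mul_right e).mul_right m, hqp⟩
      exact ih q hqp hq hqdvd
  simpa [mul_eq_one, and_assoc] using Nat.eq_one_iff_not_exists_prime_dvd.mpr hprime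

section CyclicSquaring

variable {G : Type*} [Group G] {a b c : G}

theorem conj_mul_eq_pow_four (h1 : a⁻¹ * b * a = b ^ 2) (h2 : c⁻¹ * a * c = a ^ 2)
    (h3 : b⁻¹ * c * b = c ^ 2) : c⁻¹ * (a * b) * c = (a * b) ^ 4 := by
  have hba : b * a = a * b ^ 2 := by simpa using pow_mul_pow_eq_pow_mul_pow h1 1 1
  have hconj := conj_conj_eq_pow_of_conj_eq_sq h3 (by simpa using conj_pow_pow_eq_pow h2 2 1)
  rwa [show b * a * b⁻¹ = a * b by rw [hba]; group] at hconj

theorem conj_mul_sq_eq_pow_sixteen (h1 : a⁻¹ * b * a = b ^ 2) (h2 : c⁻¹ * a * c = a ^ 2)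
    (h3 : b⁻¹ * c * b = c ^ 2) : c⁻¹ * (a * b ^ 2) * c = (a * b ^ 2) ^ 16 := by
  have hba : b * a = a * b ^ 2 := by simpa using pow_mul_pow_eq_pow_mul_pow h1 1 1
  have hconj := conj_conj_eq_pow_of_conj_eq_sq h3
    (by simpa using conj_pow_pow_eq_pow (conj_mul_eq_pow_four h1 h2 h3) 2 1)
  rwa [show b * (a * b) * b⁻¹ = a * b ^ 2 by rw [← hba]; group] at hconj

theorem conj_eq_sq_mul_pow_fifteen (h1 : a⁻¹ * b * a = b ^ 2) (h2 : c⁻¹ * a * c = a ^ 2)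
    (h3 : b⁻¹ * c * b = c ^ 2) : c⁻¹ * b * c = a ^ 2 * b ^ 15 := by
  have hab4 : (a * b) ^ 4 = a ^ 4 * b ^ 15 := by
    have h := mul_pow_pow_mul_pow_eq h1 1 4
    norm_num at h
    rw [eq_mul_inv_of_mul_eq h]; group
  calc c⁻¹ * b * c = (c⁻¹ * a * c)⁻¹ * (c⁻¹ * (a * b) * c) := by group
    _ = a ^ 2 * b ^ 15 := by rw [h2, conj_mul_eq_pow_four h1 h2 h3, hab4]; group

theorem pow_ten_mul_pow_eq_one (h1 : a⁻¹ * b * a = b ^ 2) (h2 : c⁻¹ * a * c = a ^ 2)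
    (h3 : b⁻¹ * c * b = c ^ 2) : a ^ 10 * b ^ 130995 = 1 := by
  have hS16 : (a * b ^ 2) ^ 16 = a ^ 16 * b ^ 131070 := by
    have h := mul_pow_pow_mul_pow_eq h1 2 16
    norm_num at h
    rw [eq_mul_inv_of_mul_eq h]; group
  have hswap : b ^ 15 * a ^ 2 = a ^ 2 * b ^ 60 := by
    simpa using pow_mul_pow_eq_pow_mul_pow h1 2 15
  have hS : a ^ 6 * b ^ 75 = a ^ 16 * b ^ 131070 := by
    calc a ^ 6 * b ^ 75 = a ^ 2 * a ^ 2 * (a ^ 2 * b ^ 60) * b ^ 15 := by group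
      _ = (c⁻¹ * a * c) * (c⁻¹ * b * c) * (c⁻¹ * b * c) := by
        rw [h2, conj_eq_sq_mul_pow_fifteen h1 h2 h3, ← hswap]; group
      _ = c⁻¹ * (a * b ^ 2) * c := by simp only [pow_two]; group
      _ = a ^ 16 * b ^ 131070 := by rw [conj_mul_sq_eq_pow_sixteen h1 h2 h3, hS16]
  calc a ^ 10 * b ^ 130995 = (a ^ 6)⁻¹ * (a ^ 16 * b ^ 131070) * (b ^ 75)⁻¹ := by group
    _ = 1 := by rw [← hS]; group

theorem eq_one_of_cyclic_conj_eq_sq (h1 : a⁻¹ * b * a = b ^ 2) (h2 : c⁻¹ * a * c = a ^ 2)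
    (h3 : b⁻¹ * c * b = c ^ 2) : a = 1 ∧ b = 1 ∧ c = 1 := by
  have hcomm : Commute (a ^ 10) b := by
    rw [eq_inv_of_mul_eq_one_left (pow_ten_mul_pow_eq_one h1 h2 h3)]
    exact ((Commute.refl b).pow_left _).inv_left
  have hb_fin : orderOf b ≠ 0 :=
    ne_zero_of_dvd_ne_zero (by norm_num)
      (orderOf_dvd_of_pow_eq_one (pow_pow_sub_one_eq_one_of_commute h1 hcomm))
  obtain ⟨ha, hc, hb⟩ := eq_one_of_dvd_two_pow_sub_one_cycle hb_fin
    (orderOf_dvd_pow_orderOf_sub_one h2) (orderOf_dvd_pow_orderOf_sub_one h3)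
    (orderOf_dvd_pow_orderOf_sub_one h1)
  exact ⟨orderOf_eq_one_iff.mp ha, orderOf_eq_one_iff.mp hb, orderOf_eq_one_iff.mp hc⟩

end CyclicSquaring

theorem c_sq_eq {G : Type*} [Group G] (a b c : G)
    (h1 : a⁻¹ * b * a = b ^ 2) (h2 : c⁻¹ * a * c = a ^ 2) (h3 : b⁻¹ * c * b = c ^ 2) :
    c ^ 2 = (a ^ 2)⁻¹ * (b ^ 2)⁻¹ := by
  obtain ⟨rfl, rfl, rfl⟩ := eq_one_of_cyclic_conj_eq_sq h1 h2 h3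
  simp
end

section
/- In the symmetric group S₇, the subgroup generated by the image of S₅ (permuting {1,2,3,6,7}) and the image of S₃ × S₂ (where S₃ permutes {1,2,3} and the nontrivial element of S₂ maps to (4 6)(5 7)) is all of S₇. -/
/-!
The copy of S₅ contains every transposition `(0 x)` with `x ∉ {3, 4}`, and conjugating
`(0 5)` and `(0 6)` by `t = (3 5)(4 6)` yields `(0 3)` and `(0 4)`. Transpositions sharing a
common point generate the whole symmetric group.
-/

open Equiv

namespace Equiv.Perm

variable {α : Type*} [DecidableEq α]

theorem swap_apply_mem {K : Subgroup (Perm α)} {f : Perm α} (hf : f ∈ K) {x y : α}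
    (h : swap x y ∈ K) : swap (f x) (f y) ∈ K := by
  rw [swap_apply_apply]
  exact K.mul_mem (K.mul_mem hf h) (K.inv_mem hf)

theorem eq_top_of_forall_swap_mem [Finite α] (K : Subgroup (Perm α)) (c : α)
    (h : ∀ x, swap c x ∈ K) : K = ⊤ := by
  rw [eq_top_iff, ← closure_isSwap, Subgroup.closure_le]
  rintro _ ⟨x, y, -, rfl⟩
  exact SubmonoidClass.swap_mem_trans K (swap_comm c x ▸ h x) (h y)

theorem eq_top_of_fixers_subset_of_swap_mul_swap_mem {K : Subgroup (Perm (Fin 7))}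
    (hfix : {σ : Perm (Fin 7) | σ 3 = 3 ∧ σ 4 = 4} ⊆ K) (ht : swap 3 5 * swap 4 6 ∈ K) :
    K = ⊤ := by
  refine eq_top_of_forall_swap_mem K 0 fun x => ?_
  rcases eq_or_ne x 3 with rfl | hx3
  · exact swap_apply_mem ht (x := 0) (y := 5) (hfix ⟨by decide, by decide⟩)
  rcases eq_or_ne x 4 with rfl | hx4
  · exact swap_apply_mem ht (x := 0) (y := 6) (hfix ⟨by decide, by decide⟩)
  exact hfix ⟨swap_apply_of_ne_of_ne (by decide) hx3.symm,
    swap_apply_of_ne_of_ne (by decide) hx4.symm⟩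

end Equiv.Perm

/-- The copy of S₅ in S₇ fixing 4 and 5 (0-indexed: fixing 3 and 4), together with the
copy of S₃ × S₂ (S₃ on {1,2,3}, i.e. {0,1,2}; the S₂ generator acting as
(4 6)(5 7), i.e. (3 5)(4 6)), generates all of S₇. -/
theorem brown_vertex_S7 :
    Subgroup.closure
      ({σ : Equiv.Perm (Fin 7) | σ 3 = 3 ∧ σ 4 = 4} ∪
       {τ : Equiv.Perm (Fin 7) | ∃ σ : Equiv.Perm (Fin 7),
          (∀ i : Fin 7, 3 ≤ (i : ℕ) → σ i = i) ∧
          (τ = σ ∨ τ = σ * (Equiv.swap 3 5 * Equiv.swap 4 6))}) = ⊤ := by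
  refine Perm.eq_top_of_fixers_subset_of_swap_mul_swap_mem
    (Set.subset_union_left.trans Subgroup.subset_closure) (Subgroup.subset_closure ?_)
  exact Or.inr ⟨1, fun _ _ => rfl, Or.inr (one_mul _).symm⟩
end
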